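/- arXiv:2308.07721 — 4 statements merged into one kernel-verified Lean document; each statement's English description precedes it below -/
import Mathlib

section
/- For every real constant α ≥ 1 there exist a constant c > 0 and an integer N such that for all n ≥ N the following holds. If A is a non-adaptive randomized group-testing algorithm on item set Fin n making s tests such that for every defective set I ⊆ Fin n, with probability at least 2/3 over A, the output D satisfies |I| ≤ D ≤ α·|I|, then s ≥ c · (log₂ n) / (480 · log* n)^{(log* n) + 1}. -/
open scoped ENNReal

/-- Iterated binary logarithm: `iterLog 0 x = x`, `iterLog (k+1) x = log₂ (iterLog k x)`. -/
noncomputable def iterLog : ℕ → ℝ → ℝ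
  | 0, x => x
  | k + 1, x => Real.logb 2 (iterLog k x)

/-- `logStar n` is the least `k` with `log^{[k]} n < 2`. -/
noncomputable def logStar (n : ℕ) : ℕ := sInf {k : ℕ | iterLog k (n : ℝ) < 2}

/-- A non-adaptive randomized group-testing algorithm on `Fin n` making `s` tests:
a PMF over pairs (tests, estimator). -/
abbrev Alg (n s : ℕ) : Type := PMF ((Fin s → Finset (Fin n)) × ((Fin s → Bool) → ℕ))

/-- The answer vector of the tests `Q` on the defective set `I`. -/
def answers {n s : ℕ} (Q : Fin s → Finset (Fin n)) (I : Finset (Fin n)) : Fin s → Bool :=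
  fun i => decide ((Q i ∩ I).Nonempty)

/-- The probability, over the algorithm `A`, that the output `D` satisfies
`|I| ≤ D ≤ α·|I|` on the defective set `I`. -/
noncomputable def estProb {n s : ℕ} (A : Alg n s) (α : ℝ) (I : Finset (Fin n)) : ℝ≥0∞ :=
  A.toOuterMeasure
    {p | (I.card : ℝ) ≤ (p.2 (answers p.1 I) : ℝ) ∧ (p.2 (answers p.1 I) : ℝ) ≤ α * I.card}

/-!
Fix an integer base `β > α` with `β ≥ 2` and put `T = ⌊log_β n⌋`. At each scale `j < T` draw
independently a uniform `β^j`-subset `I` and a uniform `β^(j+1)`-subset `J` of the items. Since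
`α |I| < |J|`, no output can be correct for both, so a correct algorithm must give them different
answer vectors with probability at least `1/3`. On the other hand a single test `Q` of size `q`
meets a uniform `k`-set with probability at most `qk/n` and misses it with probability at most
`n/(qk)`, so it separates the pair with probability at most `(β + 1) min(y, 1/y)`, `y = qβ^j/n`.
As `y` grows geometrically in `j`, summing over the scales costs `O(β)` per test, whence
`T/3 ≤ 8(β + 1)s`. This gives `s ≥ c log₂ n`, and the denominator `(480 log* n)^(log* n + 1)`
is at least `1` (or `0`, and then the claim is trivial).
-/

open Finset

/-- `φ(t) = t / (1 + t)` increases from `0` to `1`, so these bounds telescope along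
`t, βt, β²t, …`. -/
theorem min_inv_le_eight_mul_sub {t β : ℝ} (ht : 0 ≤ t) (hβ : 2 ≤ β) :
    min t t⁻¹ ≤ 8 * (β * t / (1 + β * t) - t / (1 + t)) := by
  have hdiff : β * t / (1 + β * t) - t / (1 + t) = (β - 1) * t / ((1 + β * t) * (1 + t)) := by
    field_simp; ring
  rw [hdiff, mul_div_assoc']
  rcases le_or_gt t 1 with h1 | h1
  · refine (min_le_left _ _).trans ?_
    rw [le_div_iff₀ (by positivity)]
    nlinarith [mul_nonneg ht (sub_nonneg.2 h1), mul_nonneg (mul_nonneg ht ht) (sub_nonneg.2 h1)]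
  · refine (min_le_right _ _).trans ?_
    rw [le_div_iff₀ (by positivity), inv_mul_eq_div, div_le_iff₀ (by linarith)]
    have h1t : 0 ≤ (t - 1) * t := by nlinarith
    nlinarith [mul_nonneg (by linarith : (0:ℝ) ≤ β) h1t,
      mul_nonneg (sub_nonneg.2 hβ) (mul_nonneg ht ht)]

theorem sum_range_min_inv_le {x β : ℝ} (hx : 0 ≤ x) (hβ : 2 ≤ β) (T : ℕ) :
    ∑ j ∈ range T, min (x * β ^ j) (x * β ^ j)⁻¹ ≤ 8 := by
  set φ : ℕ → ℝ := fun j => x * β ^ j / (1 + x * β ^ j)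
  have hφ : ∀ j, 0 ≤ φ j ∧ φ j ≤ 1 := fun j => by
    have : 0 ≤ x * β ^ j := by positivity
    exact ⟨by positivity, by rw [div_le_one (by positivity)]; linarith⟩
  calc ∑ j ∈ range T, min (x * β ^ j) (x * β ^ j)⁻¹
      ≤ ∑ j ∈ range T, 8 * (φ (j + 1) - φ j) := by
        refine sum_le_sum fun j _ => ?_
        have := min_inv_le_eight_mul_sub (t := x * β ^ j) (by positivity) hβ
        simpa only [φ, pow_succ, mul_comm β, mul_assoc] using this
    _ = 8 * (φ T - φ 0) := by rw [← mul_sum, sum_range_sub]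
    _ ≤ 8 := by linarith [hφ T, hφ 0]

theorem mul_add_mul_le_min {a a' b b' y β : ℝ} (ha : 0 ≤ a) (ha₁ : a ≤ 1) (ha' : 0 ≤ a')
    (ha'₁ : a' ≤ 1) (hb : 0 ≤ b) (hb₁ : b ≤ 1) (hb' : 0 ≤ b') (hb'₁ : b' ≤ 1)
    (hβ : 1 ≤ β)
    (hay : a ≤ y) (ha'y : a' ≤ y⁻¹) (hby : b ≤ β * y) (hb'y : b' ≤ y⁻¹) :
    a * b' + a' * b ≤ (β + 1) * min y y⁻¹ := by
  have hy : 0 ≤ y⁻¹ := inv_nonneg.2 (ha.trans hay)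
  have h1 : a * b' ≤ min y y⁻¹ := le_min (by nlinarith) (by nlinarith)
  have h2 : a' * b ≤ β * min y y⁻¹ := by
    rw [mul_min_of_nonneg _ _ (by linarith)]
    exact le_min (by nlinarith) (by nlinarith)
  linarith

theorem Nat.choose_add_le_add_mul_choose (r q k : ℕ) :
    (r + q).choose (k + 1) ≤ r.choose (k + 1) + q * (r + q - 1).choose k := by
  induction q with
  | zero => simp
  | succ q ih =>
    have hmono : (r + q - 1).choose k ≤ (r + q).choose k := Nat.choose_le_choose k (by omega)
    rw [← add_assoc, Nat.choose_succ_succ', Nat.add_sub_cancel]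
    nlinarith

theorem Nat.add_mul_choose_le_choose_add (r q k : ℕ) :
    r.choose (k + 1) + q * r.choose k ≤ (r + q).choose (k + 1) := by
  induction q with
  | zero => simp
  | succ q ih =>
    have hmono : r.choose k ≤ (r + q).choose k := Nat.choose_le_choose k (by omega)
    rw [← add_assoc, Nat.choose_succ_succ']
    nlinarith

section Frac

variable {ι : Type*}

noncomputable def frac (s : Finset ι) (p : ι → Prop) [DecidablePred p] : ℝ :=
  #{a ∈ s | p a} / #s

variable (s : Finset ι) (p : ι → Prop) [DecidablePred p]

theorem frac_nonneg : 0 ≤ frac s p := by unfold frac; positivity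

theorem frac_le_one : frac s p ≤ 1 :=
  div_le_one_of_le₀ (by exact_mod_cast card_filter_le s p) (Nat.cast_nonneg _)

theorem frac_le_sum_frac {κ : Type*} [Fintype κ] (q : κ → ι → Prop)
    [∀ i, DecidablePred (q i)] (h : ∀ a ∈ s, p a → ∃ i, q i a) : frac s p ≤ ∑ i, frac s (q i) := by
  classical
  have hsub : {a ∈ s | p a} ⊆ univ.biUnion fun i => {a ∈ s | q i a} := fun a ha => by
    obtain ⟨has, hpa⟩ := mem_filter.1 ha
    obtain ⟨i, hi⟩ := h a has hpa
    exact mem_biUnion.2 ⟨i, mem_univ i, mem_filter.2 ⟨has, hi⟩⟩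
  have hcard := (card_le_card hsub).trans card_biUnion_le
  simp only [frac, ← sum_div]
  gcongr
  exact_mod_cast hcard

theorem frac_product_decide_ne_le (t : Finset ι) :
    frac (s ×ˢ t) (fun x => decide (p x.1) ≠ decide (p x.2))
      ≤ frac s p * frac t (¬p ·) + frac s (¬p ·) * frac t p := by
  classical
  have hsub : {x ∈ s ×ˢ t | decide (p x.1) ≠ decide (p x.2)}
      ⊆ {a ∈ s | p a} ×ˢ {b ∈ t | ¬p b} ∪ {a ∈ s | ¬p a} ×ˢ {b ∈ t | p b} :=
    fun x hx => by
    simp only [mem_filter, mem_product, mem_union] at hx ⊢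
    by_cases h1 : p x.1 <;> by_cases h2 : p x.2 <;> simp_all
  have hcard := (card_le_card hsub).trans (card_union_le _ _)
  simp only [card_product] at hcard
  simp only [frac, card_product, Nat.cast_mul, div_mul_div_comm, ← add_div]
  gcongr
  exact_mod_cast hcard

end Frac

section Subsets

variable {α : Type*} [Fintype α] [DecidableEq α]

theorem card_filter_not_inter_nonempty_powersetCard (Q : Finset α) (k : ℕ) :
    #{S ∈ powersetCard k (univ : Finset α) | ¬(Q ∩ S).Nonempty}
      = (Fintype.card α - #Q).choose k := by
  have : {S ∈ powersetCard k (univ : Finset α) | ¬(Q ∩ S).Nonempty} = powersetCard k Qᶜ := by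
    ext S
    simp [← not_disjoint_iff_nonempty_inter, subset_compl_iff_disjoint_right, disjoint_comm,
      and_comm]
  rw [this, card_powersetCard, card_compl]

theorem card_filter_inter_nonempty_powersetCard_mul_le (Q : Finset α) {k : ℕ} (hk : 1 ≤ k) :
    #{S ∈ powersetCard k (univ : Finset α) | (Q ∩ S).Nonempty} * Fintype.card α
      ≤ #Q * k * (Fintype.card α).choose k := by
  set n := Fintype.card α
  obtain ⟨k, rfl⟩ : ∃ k', k = k' + 1 := ⟨k - 1, by omega⟩
  obtain ⟨r, hr⟩ : ∃ r, n = r + #Q := ⟨n - #Q, by have := Q.card_le_univ; omega⟩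
  have hsplit := card_filter_add_card_filter_not (s := powersetCard (k + 1) (univ : Finset α))
    (fun S => (Q ∩ S).Nonempty)
  rw [card_filter_not_inter_nonempty_powersetCard, card_powersetCard, card_univ] at hsplit
  have hpascal := Nat.choose_add_le_add_mul_choose r #Q k
  rcases Nat.eq_zero_or_pos n with hn | hn
  · simp [hn]
  have hid := Nat.add_one_mul_choose_eq (n - 1) k
  rw [Nat.sub_add_cancel hn] at hid
  rw [← hr] at hpascal
  have : n - #Q = r := by omega
  rw [this] at hsplit
  nlinarith

theorem card_filter_not_inter_nonempty_powersetCard_mul_le (Q : Finset α) {k : ℕ}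
    (hk : 1 ≤ k) :
    #{S ∈ powersetCard k (univ : Finset α) | ¬(Q ∩ S).Nonempty} * (#Q * k)
      ≤ Fintype.card α * (Fintype.card α).choose k := by
  set n := Fintype.card α
  obtain ⟨k, rfl⟩ : ∃ k', k = k' + 1 := ⟨k - 1, by omega⟩
  obtain ⟨r, hr⟩ : ∃ r, n = r + #Q := ⟨n - #Q, by have := Q.card_le_univ; omega⟩
  rw [card_filter_not_inter_nonempty_powersetCard, show n - #Q = r by omega]
  have hpascal := Nat.add_mul_choose_le_choose_add r #Q k
  have hsucc := Nat.choose_succ_right_eq r k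
  rw [← hr] at hpascal
  have hrn : r - k ≤ n := by omega
  calc r.choose (k + 1) * (#Q * (k + 1)) = #Q * (r.choose k * (r - k)) := by rw [← hsucc]; ring
    _ ≤ #Q * (r.choose k * n) := by gcongr
    _ = n * (#Q * r.choose k) := by ring
    _ ≤ n * n.choose (k + 1) := by gcongr; omega

theorem frac_inter_nonempty_powersetCard_le (Q : Finset α) {k : ℕ} (hk : 1 ≤ k) :
    frac (powersetCard k (univ : Finset α)) (fun S => (Q ∩ S).Nonempty)
      ≤ #Q * k / Fintype.card α := by
  rw [frac, card_powersetCard, card_univ]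
  rcases Nat.eq_zero_or_pos ((Fintype.card α).choose k) with h0 | hpos
  · rw [h0, Nat.cast_zero, div_zero]; positivity
  have hn : 0 < Fintype.card α := by
    have := Nat.choose_eq_zero_of_lt (n := Fintype.card α) (k := k); omega
  rw [div_le_div_iff₀ (by exact_mod_cast hpos) (by exact_mod_cast hn)]
  exact_mod_cast card_filter_inter_nonempty_powersetCard_mul_le Q hk

theorem frac_not_inter_nonempty_powersetCard_le {Q : Finset α} (hQ : Q.Nonempty) {k : ℕ}
    (hk : 1 ≤ k) :
    frac (powersetCard k (univ : Finset α)) (fun S => ¬(Q ∩ S).Nonempty)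
      ≤ Fintype.card α / (#Q * k) := by
  rw [frac, card_powersetCard, card_univ]
  rcases Nat.eq_zero_or_pos ((Fintype.card α).choose k) with h0 | hpos
  · rw [h0, Nat.cast_zero, div_zero]; positivity
  have hQk : (0 : ℝ) < #Q * k := by have := hQ.card_pos; positivity
  rw [div_le_div_iff₀ (by exact_mod_cast hpos) hQk]
  exact_mod_cast card_filter_not_inter_nonempty_powersetCard_mul_le Q hk

theorem frac_test_separates_le (Q : Finset α) {k β : ℕ} (hk : 1 ≤ k) (hβ : 1 ≤ β) :
    frac (powersetCard k (univ : Finset α) ×ˢ powersetCard (β * k) univ)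
        (fun x => decide ((Q ∩ x.1).Nonempty) ≠ decide ((Q ∩ x.2).Nonempty))
      ≤ (β + 1) * min (#Q * k / Fintype.card α : ℝ) (#Q * k / Fintype.card α)⁻¹ := by
  rcases Q.eq_empty_or_nonempty with rfl | hQ
  · simp [frac]
  have hQk : (0 : ℝ) < #Q := by exact_mod_cast hQ.card_pos
  refine (frac_product_decide_ne_le _ (fun S => (Q ∩ S).Nonempty) _).trans ?_
  apply mul_add_mul_le_min (frac_nonneg _ _) (frac_le_one _ _)
    (frac_nonneg _ _) (frac_le_one _ _) (frac_nonneg _ _) (frac_le_one _ _) (frac_nonneg _ _)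
    (frac_le_one _ _) (by exact_mod_cast hβ) (frac_inter_nonempty_powersetCard_le Q hk)
  · rw [inv_div]; exact frac_not_inter_nonempty_powersetCard_le hQ hk
  · refine (frac_inter_nonempty_powersetCard_le Q (one_le_mul hβ hk)).trans_eq ?_
    push_cast; ring
  · refine (frac_not_inter_nonempty_powersetCard_le hQ (one_le_mul hβ hk)).trans ?_
    rw [inv_div]
    gcongr
    exact_mod_cast Nat.le_mul_of_pos_left k hβ

def scalePairs (α : Type*) [Fintype α] (β j : ℕ) : Finset (Finset α × Finset α) :=
  powersetCard (β ^ j) univ ×ˢ powersetCard (β ^ (j + 1)) univ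

theorem sum_frac_test_separates_le (Q : Finset α) {β : ℕ} (hβ : 2 ≤ β) (T : ℕ) :
    ∑ j ∈ range T, frac (scalePairs α β j)
        (fun x => decide ((Q ∩ x.1).Nonempty) ≠ decide ((Q ∩ x.2).Nonempty))
      ≤ 8 * (β + 1) := by
  set x : ℝ := #Q / Fintype.card α
  calc _ ≤ ∑ j ∈ range T, ((β : ℝ) + 1) * min (x * β ^ j) (x * β ^ j)⁻¹ :=
        sum_le_sum fun j _ => by
          have := frac_test_separates_le Q (Nat.one_le_pow j β (by omega)) (by omega : 1 ≤ β)
          rw [Nat.cast_pow, mul_div_right_comm] at this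
          rwa [scalePairs, pow_succ']
    _ = (β + 1) * ∑ j ∈ range T, min (x * β ^ j) (x * β ^ j)⁻¹ := (mul_sum ..).symm
    _ ≤ (β + 1) * 8 := by
        gcongr
        exact sum_range_min_inv_le (by positivity) (by exact_mod_cast hβ) T
    _ = 8 * (β + 1) := mul_comm ..

end Subsets

theorem PMF.toOuterMeasure_add_le_inter_add_one {X : Type*} (A : PMF X) (E F : Set X) :
    A.toOuterMeasure E + A.toOuterMeasure F ≤ A.toOuterMeasure (E ∩ F) + 1 := by
  simp only [PMF.toOuterMeasure_apply]
  rw [← A.tsum_coe, ← ENNReal.tsum_add, ← ENNReal.tsum_add]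
  refine ENNReal.tsum_le_tsum fun x => ?_
  by_cases hE : x ∈ E <;> by_cases hF : x ∈ F <;> simp [hE, hF]

theorem PMF.tsum_mul_le {X : Type*} (A : PMF X) {f : X → ℝ≥0∞} {c : ℝ≥0∞}
    (h : ∀ x, f x ≤ c) :
    ∑' x, A x * f x ≤ c :=
  calc ∑' x, A x * f x ≤ ∑' x, A x * c := ENNReal.tsum_le_tsum fun x => by gcongr; exact h x
    _ = c := by rw [ENNReal.tsum_mul_right, A.tsum_coe, one_mul]

section Algorithm

variable {n s : ℕ} {α : ℝ} {A : Alg n s}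

theorem one_third_le_prob_answers_ne (hA : ∀ I, (2 / 3 : ℝ≥0∞) ≤ estProb A α I)
    {I J : Finset (Fin n)} (hIJ : α * #I < #J) :
    1 / 3 ≤ A.toOuterMeasure {p | answers p.1 I ≠ answers p.1 J} := by
  have hboth := (add_le_add (hA I) (hA J)).trans (A.toOuterMeasure_add_le_inter_add_one _ _)
  have h43 : (2 / 3 : ℝ≥0∞) + 2 / 3 = 1 / 3 + 1 := by
    rw [ENNReal.div_add_div_same, show (2 + 2 : ℝ≥0∞) = 1 + 3 by norm_num,
      ← ENNReal.div_add_div_same, ENNReal.div_self (by norm_num) (by norm_num)]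
  rw [h43] at hboth
  refine (ENNReal.add_le_add_iff_right ENNReal.one_ne_top).1
    (hboth.trans (add_le_add_left (MeasureTheory.measure_mono ?_) _))
  rintro p ⟨⟨-, hI⟩, ⟨hJ, -⟩⟩ heq
  rw [heq] at hI
  linarith

theorem one_third_le_tsum_frac_answers_ne (hA : ∀ I, (2 / 3 : ℝ≥0∞) ≤ estProb A α I)
    {P : Finset (Finset (Fin n) × Finset (Fin n))} (hP : P.Nonempty)
    (hgap : ∀ x ∈ P, α * #x.1 < #x.2) :
    1 / 3 ≤ ∑' p, A p *
      ENNReal.ofReal (frac P fun x => answers p.1 x.1 ≠ answers p.1 x.2) := by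
  have hP0 : (#P : ℝ≥0∞) ≠ 0 := by simp [hP.ne_empty]
  have hcount : ∀ p : (Fin s → Finset (Fin n)) × ((Fin s → Bool) → ℕ),
      ∑ x ∈ P, {q | answers q.1 x.1 ≠ answers q.1 x.2}.indicator A p
        = A p * #{x ∈ P | answers p.1 x.1 ≠ answers p.1 x.2} := fun p => by
    simp [Set.indicator_apply, sum_ite, mul_comm]
  calc (1 / 3 : ℝ≥0∞) = (∑ _x ∈ P, 1 / 3) / #P := by
        rw [sum_const, nsmul_eq_mul, mul_comm, ENNReal.mul_div_cancel_right hP0 (by simp)]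
    _ ≤ (∑ x ∈ P, A.toOuterMeasure {q | answers q.1 x.1 ≠ answers q.1 x.2}) / #P := by
        gcongr with x hx
        exact one_third_le_prob_answers_ne hA (hgap x hx)
    _ = (∑' p, A p * #{x ∈ P | answers p.1 x.1 ≠ answers p.1 x.2}) / #P := by
        simp only [PMF.toOuterMeasure_apply, ← hcount]
        rw [Summable.tsum_finsetSum fun _ _ => ENNReal.summable]
    _ = ∑' p, A p * ENNReal.ofReal (frac P fun x => answers p.1 x.1 ≠ answers p.1 x.2) := by
        simp only [frac, ENNReal.ofReal_div_of_pos (Nat.cast_pos.2 hP.card_pos),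
          ENNReal.ofReal_natCast]
        simp only [div_eq_mul_inv, ← mul_assoc, ENNReal.tsum_mul_right]

theorem sum_frac_answers_ne_le {β : ℕ} (hβ : 2 ≤ β) (Q : Fin s → Finset (Fin n)) (T : ℕ) :
    ∑ j ∈ range T, frac (scalePairs (Fin n) β j) (fun x => answers Q x.1 ≠ answers Q x.2)
      ≤ 8 * (β + 1) * s :=
  calc _ ≤ ∑ j ∈ range T, ∑ i, frac (scalePairs (Fin n) β j)
          (fun x => answers Q x.1 i ≠ answers Q x.2 i) :=
        sum_le_sum fun j _ => frac_le_sum_frac _ _ _ fun _ _ h => Function.ne_iff.1 h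
    _ = ∑ i, ∑ j ∈ range T, frac (scalePairs (Fin n) β j)
          (fun x => answers Q x.1 i ≠ answers Q x.2 i) := sum_comm
    _ ≤ ∑ _i : Fin s, 8 * ((β : ℝ) + 1) :=
        sum_le_sum fun i _ => sum_frac_test_separates_le (Q i) hβ T
    _ = 8 * (β + 1) * s := by rw [sum_const, card_univ, Fintype.card_fin, nsmul_eq_mul]; ring

theorem log_le_of_estimates (hA : ∀ I, (2 / 3 : ℝ≥0∞) ≤ estProb A α I) {β : ℕ} (hβ : 2 ≤ β)
    (hαβ : α < β) : (Nat.log β n : ℝ) ≤ 24 * (β + 1) * s := by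
  set T := Nat.log β n
  have hscale : ∀ j ∈ range T, (1 / 3 : ℝ≥0∞) ≤ ∑' p, A p *
      ENNReal.ofReal (frac (scalePairs (Fin n) β j)
        fun x => answers p.1 x.1 ≠ answers p.1 x.2) := by
    intro j hj
    have hn : n ≠ 0 := by rintro rfl; simp [T] at hj
    have hle : β ^ (j + 1) ≤ n :=
      (Nat.pow_le_pow_right (by omega) (mem_range.1 hj)).trans (Nat.pow_log_le_self β hn)
    have hle' : β ^ j ≤ n := (Nat.pow_le_pow_right (by omega) j.le_succ).trans hle
    refine one_third_le_tsum_frac_answers_ne hA ?_ fun x hx => ?_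
    · exact (powersetCard_nonempty.2 (by simpa using hle')).product
        (powersetCard_nonempty.2 (by simpa using hle))
    · simp only [scalePairs, mem_product, mem_powersetCard] at hx
      rw [hx.1.2, hx.2.2]
      push_cast
      rw [pow_succ']
      exact mul_lt_mul_of_pos_right hαβ (by positivity)
  have hsum : ENNReal.ofReal (T / 3) ≤ ENNReal.ofReal (8 * (β + 1) * s) :=
    calc ENNReal.ofReal (T / 3) = ∑ _j ∈ range T, (1 / 3 : ℝ≥0∞) := by
          rw [sum_const, card_range, nsmul_eq_mul, ENNReal.ofReal_div_of_pos (by norm_num),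
            ENNReal.ofReal_natCast, ENNReal.ofReal_ofNat, mul_one_div]
      _ ≤ ∑ j ∈ range T, ∑' p, A p * ENNReal.ofReal
            (frac (scalePairs (Fin n) β j) fun x => answers p.1 x.1 ≠ answers p.1 x.2) :=
          sum_le_sum hscale
      _ = ∑' p, A p * ENNReal.ofReal (∑ j ∈ range T,
            frac (scalePairs (Fin n) β j) fun x => answers p.1 x.1 ≠ answers p.1 x.2) := by
          rw [← Summable.tsum_finsetSum fun _ _ => ENNReal.summable]
          simp only [ENNReal.ofReal_sum_of_nonneg fun _ _ => frac_nonneg _ _, mul_sum]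
      _ ≤ ENNReal.ofReal (8 * (β + 1) * s) :=
          A.tsum_mul_le fun p => ENNReal.ofReal_le_ofReal (sum_frac_answers_ne_le hβ p.1 T)
  have := (ENNReal.ofReal_le_ofReal_iff (by positivity)).1 hsum
  linarith

end Algorithm

theorem logb_le_two_mul_log_mul_logb {β n : ℕ} (hβ : 2 ≤ β) (hn : β ≤ n) :
    Real.logb 2 n ≤ 2 * Nat.log β n * Real.logb 2 β := by
  have hT : 1 ≤ Nat.log β n := Nat.log_pos (by omega) hn
  have hlt : (n : ℝ) ≤ (β : ℝ) ^ (Nat.log β n + 1) := by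
    exact_mod_cast (Nat.lt_pow_succ_log_self (by omega) n).le
  have hlogβ : 0 ≤ Real.logb 2 β :=
    Real.logb_nonneg one_lt_two (by exact_mod_cast (by omega : 1 ≤ β))
  calc Real.logb 2 n ≤ Real.logb 2 ((β : ℝ) ^ (Nat.log β n + 1)) :=
        Real.logb_le_logb_of_le one_lt_two (by exact_mod_cast (by omega : 0 < n)) hlt
    _ = (Nat.log β n + 1) * Real.logb 2 β := by rw [Real.logb_pow]; push_cast; ring
    _ ≤ 2 * Nat.log β n * Real.logb 2 β := by
        gcongr
        have : (1 : ℝ) ≤ Nat.log β n := by exact_mod_cast hT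
        linarith

theorem stmt0_general (α : ℝ) :
    ∃ c : ℝ, 0 < c ∧ ∃ N : ℕ, ∀ n : ℕ, N ≤ n → ∀ s : ℕ, ∀ A : Alg n s,
      (∀ I : Finset (Fin n), (2 / 3 : ℝ≥0∞) ≤ estProb A α I) →
      c * Real.logb 2 n / (480 * logStar n : ℝ) ^ (logStar n + 1) ≤ (s : ℝ) := by
  set β := ⌈α⌉₊ + 2
  have hβ : 2 ≤ β := by omega
  have hαβ : α < β := by
    have := Nat.le_ceil α
    push_cast [β]
    linarith
  have hlogβ : 0 < Real.logb 2 β := Real.logb_pos one_lt_two (by exact_mod_cast hβ)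
  refine ⟨1 / (48 * (β + 1) * Real.logb 2 β), by positivity, β, fun n hn s A hA => ?_⟩
  have hlog := logb_le_two_mul_log_mul_logb hβ hn
  have hT := log_le_of_estimates hA hβ hαβ
  have hcs : 1 / (48 * (β + 1) * Real.logb 2 β) * Real.logb 2 n ≤ s := by
    rw [one_div_mul_eq_div, div_le_iff₀ (by positivity)]
    nlinarith
  rcases Nat.eq_zero_or_pos (logStar n) with hL | hL
  · simp [hL]
  have hlogn : 0 ≤ Real.logb 2 n :=
    Real.logb_nonneg one_lt_two (by exact_mod_cast (by omega : 1 ≤ n))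
  refine (div_le_self (by positivity) (one_le_pow₀ ?_)).trans hcs
  have : (1 : ℝ) ≤ logStar n := by exact_mod_cast hL
  linarith

theorem stmt0 (α : ℝ) (hα : 1 ≤ α) :
    ∃ c : ℝ, 0 < c ∧ ∃ N : ℕ, ∀ n : ℕ, N ≤ n → ∀ s : ℕ, ∀ A : Alg n s,
      (∀ I : Finset (Fin n), (2 / 3 : ℝ≥0∞) ≤ estProb A α I) →
      c * Real.logb 2 n / (480 * logStar n : ℝ) ^ (logStar n + 1) ≤ (s : ℝ) :=
  stmt0_general α
end

section
/- For every real constant α ≥ 1 and every fixed positive integer k there exist a constant c_k > 0 and an integer N_k such that for all n ≥ N_k the following holds. If A is a non-adaptive randomized group-testing algorithm on item set Fin n making s tests such that for every defective set I ⊆ Fin n, with probability at least 2/3 over A, the output D satisfies |I| ≤ D ≤ α·|I|, then s ≥ c_k · (log₂ n) / log^{[k]} n. -/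
open scoped ENNReal

/-!
Fix a single outcome `(Q, E)` of the algorithm and a chain `I₀ ⊆ I₁ ⊆ ⋯ ⊆ I_{m-1}` of defective
sets whose sizes grow geometrically with ratio `B > α`. The answer vectors increase along the chain,
and two sets on which `E` is correct need different outputs, hence different answer vectors; so `E`
is correct on at most `s + 1` members of the chain. If every set is estimated correctly with
probability `2/3`, averaging over `A` gives `2m/3 ≤ s + 1`, and `m` can be taken `≈ log_B n`.
Thus `s = Ω(log n)`; dividing by `log^{[k]} n`, which is `≥ 1` for large `n`, only weakens this.
-/

open Filter Finset

theorem tendsto_iterLog_atTop (k : ℕ) : Tendsto (iterLog k) atTop atTop := by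
  induction k with
  | zero => exact tendsto_id
  | succ k ih => exact (Real.tendsto_logb_atTop one_lt_two).comp ih

open scoped Classical in
theorem PMF.sum_toOuterMeasure_le_of_forall_card_le {α ι : Type*} (A : PMF α) (t : Finset ι)
    (S : ι → Set α) (K : ℕ) (h : ∀ a, #{j ∈ t | a ∈ S j} ≤ K) :
    ∑ j ∈ t, A.toOuterMeasure (S j) ≤ K := by
  calc ∑ j ∈ t, A.toOuterMeasure (S j)
      = ∑' a, ∑ j ∈ t, (S j).indicator A a := by
        simp_rw [PMF.toOuterMeasure_apply]
        exact (Summable.tsum_finsetSum fun _ _ => ENNReal.summable).symm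
    _ = ∑' a, #{j ∈ t | a ∈ S j} * A a := by
        simp_rw [sum_indicator_eq_sum_filter, sum_const, nsmul_eq_mul]
    _ ≤ ∑' a, K * A a := ENNReal.tsum_le_tsum fun a => by gcongr; exact_mod_cast h a
    _ = K := by rw [ENNReal.tsum_mul_left, PMF.tsum_coe, mul_one]

section Chain

variable {n s : ℕ}

def positiveTests (Q : Fin s → Finset (Fin n)) (I : Finset (Fin n)) : Finset (Fin s) :=
  {i | (Q i ∩ I).Nonempty}

theorem answers_eq_decide_mem_positiveTests (Q : Fin s → Finset (Fin n)) (I : Finset (Fin n)) :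
    answers Q I = fun i => decide (i ∈ positiveTests Q I) := by
  funext i
  simp [answers, positiveTests]

theorem positiveTests_mono (Q : Fin s → Finset (Fin n)) : Monotone (positiveTests Q) :=
  fun _ _ hIJ i hi => by
    simp only [positiveTests, mem_filter, mem_univ, true_and] at hi ⊢
    exact hi.mono (inter_subset_inter_left hIJ)

def correctSet (α : ℝ) (I : Finset (Fin n)) :
    Set ((Fin s → Finset (Fin n)) × ((Fin s → Bool) → ℕ)) :=
  {p | (#I : ℝ) ≤ (p.2 (answers p.1 I) : ℝ) ∧ (p.2 (answers p.1 I) : ℝ) ≤ α * #I}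

open scoped Classical in
theorem card_filter_mem_correctSet_le {α : ℝ} {m : ℕ} {I : ℕ → Finset (Fin n)} (hI : Monotone I)
    (hgrow : ∀ j j', j < j' → j' < m → α * #(I j) < #(I j'))
    (p : (Fin s → Finset (Fin n)) × ((Fin s → Bool) → ℕ)) :
    #{j ∈ range m | p ∈ correctSet α (I j)} ≤ s + 1 := by
  obtain ⟨Q, E⟩ := p
  set t := {j ∈ range m | (Q, E) ∈ correctSet α (I j)}
  have hstrict : StrictMonoOn (fun j => #(positiveTests Q (I j))) (t : Set ℕ) := by
    intro j hj j' hj' hjj'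
    rw [mem_coe, mem_filter, mem_range] at hj hj'
    obtain ⟨-, -, hj⟩ := hj
    obtain ⟨hj'm, hj', -⟩ := hj'
    dsimp only at hj hj'
    refine card_strictMono ((positiveTests_mono Q (hI hjj'.le)).ssubset_of_ne fun heq => ?_)
    have hE : E (answers Q (I j)) = E (answers Q (I j')) := by
      rw [answers_eq_decide_mem_positiveTests, heq, ← answers_eq_decide_mem_positiveTests]
    have := hgrow j j' hjj' hj'm
    rw [hE] at hj
    linarith
  have hmaps : Set.MapsTo (fun j => #(positiveTests Q (I j))) (t : Set ℕ) (range (s + 1)) :=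
    fun j _ => by simpa [Nat.lt_succ_iff] using card_le_univ (positiveTests Q (I j))
  simpa using card_le_card_of_injOn _ hmaps hstrict.injOn

theorem two_mul_le_of_chain {α : ℝ} {A : Alg n s} (hA : ∀ I, (2 / 3 : ℝ≥0∞) ≤ estProb A α I)
    {m : ℕ} {I : ℕ → Finset (Fin n)} (hI : Monotone I)
    (hgrow : ∀ j j', j < j' → j' < m → α * #(I j) < #(I j')) :
    2 * m ≤ 3 * (s + 1) := by
  have h : (2 / 3 : ℝ≥0∞) * m ≤ (s + 1 : ℕ) := calc
    (2 / 3 : ℝ≥0∞) * m = ∑ _j ∈ range m, (2 / 3 : ℝ≥0∞) := by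
      rw [sum_const, card_range, nsmul_eq_mul, mul_comm]
    _ ≤ ∑ j ∈ range m, A.toOuterMeasure (correctSet α (I j)) := sum_le_sum fun j _ => hA (I j)
    _ ≤ (s + 1 : ℕ) := A.sum_toOuterMeasure_le_of_forall_card_le _ _ _
        (card_filter_mem_correctSet_le hI hgrow)
  have := ENNReal.toReal_mono (by simp) h
  simp only [ENNReal.toReal_mul, ENNReal.toReal_div, ENNReal.toReal_natCast,
    ENNReal.toReal_ofNat] at this
  exact_mod_cast (by linarith : (2 * m : ℝ) ≤ 3 * (s + 1 : ℕ))

theorem two_mul_log_le {α : ℝ} {B : ℕ} (hαB : α < B) (hB : 1 < B) {A : Alg n s}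
    (hA : ∀ I, (2 / 3 : ℝ≥0∞) ≤ estProb A α I) :
    2 * Nat.log B n ≤ 3 * (s + 1) := by
  refine two_mul_le_of_chain hA (I := fun j => {i : Fin n | (i : ℕ) < B ^ (j + 1)})
    (fun j j' hjj' i => ?_) fun j j' hjj' hj' => ?_
  · simp only [mem_filter, mem_univ, true_and]
    exact fun hi => hi.trans_le (Nat.pow_le_pow_right hB.le (by omega))
  · have hj'n : B ^ (j' + 1) ≤ n :=
      (Nat.pow_le_pow_right hB.le hj').trans (Nat.pow_log_le_self B (by rintro rfl; simp at hj'))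
    have hjn : B ^ (j + 1) ≤ n := (Nat.pow_le_pow_right hB.le (by omega)).trans hj'n
    rw [Fin.card_filter_val_lt, Fin.card_filter_val_lt, min_eq_right hjn, min_eq_right hj'n]
    calc α * ((B ^ (j + 1) : ℕ) : ℝ) < B * ((B ^ (j + 1) : ℕ) : ℝ) := by gcongr
      _ ≤ ((B ^ (j' + 1) : ℕ) : ℝ) := by
        rw [← Nat.cast_mul, ← pow_succ', Nat.cast_le]
        exact Nat.pow_le_pow_right hB.le (by omega)

theorem logb_le_three_mul_of_five_le {α : ℝ} {B : ℕ} (hαB : α < B) (hB : 1 < B) {A : Alg n s}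
    (hA : ∀ I, (2 / 3 : ℝ≥0∞) ≤ estProb A α I) (hn : 5 ≤ Real.logb B n) :
    Real.logb B n ≤ 3 * s := by
  have hm : Real.logb B n < Nat.log B n + 1 := by
    rw [← Real.natFloor_logb_natCast]
    exact Nat.lt_floor_add_one _
  have hs : (2 * Nat.log B n : ℝ) ≤ 3 * (s + 1) := by exact_mod_cast two_mul_log_le hαB hB hA
  linarith

end Chain

theorem stmt1_general (α : ℝ) (hα : 1 ≤ α) (k : ℕ) :
    ∃ c : ℝ, 0 < c ∧ ∃ N : ℕ, ∀ n : ℕ, N ≤ n → ∀ s : ℕ, ∀ A : Alg n s,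
      (∀ I : Finset (Fin n), (2 / 3 : ℝ≥0∞) ≤ estProb A α I) →
      c * Real.logb 2 n / iterLog k n ≤ (s : ℝ) := by
  set B := ⌊α⌋₊ + 1
  have hαB : α < B := by simpa [B] using Nat.lt_floor_add_one α
  have hB : 1 < B := by have := (Nat.one_le_floor_iff α).mpr hα; omega
  have hB' : (1 : ℝ) < B := by exact_mod_cast hB
  have hL : 0 < Real.logb 2 B := Real.logb_pos one_lt_two hB'
  obtain ⟨N, hN⟩ := eventually_atTop.mp <|
    (((tendsto_iterLog_atTop k).comp tendsto_natCast_atTop_atTop).eventually_ge_atTop 1).and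
      (((Real.tendsto_logb_atTop hB').comp tendsto_natCast_atTop_atTop).eventually_ge_atTop 5)
  refine ⟨1 / (3 * Real.logb 2 B), by positivity, N, fun n hn s A hA => ?_⟩
  obtain ⟨hiter, hlog⟩ : 1 ≤ iterLog k n ∧ 5 ≤ Real.logb B n := hN n hn
  have hs := logb_le_three_mul_of_five_le hαB hB hA hlog
  calc 1 / (3 * Real.logb 2 B) * Real.logb 2 n / iterLog k n
      = Real.logb B n / 3 / iterLog k n := by unfold Real.logb; field_simp
    _ ≤ Real.logb B n / 3 := div_le_self (by linarith) hiter
    _ ≤ s := by linarith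

theorem stmt1 (α : ℝ) (hα : 1 ≤ α) (k : ℕ) (hk : 0 < k) :
    ∃ c : ℝ, 0 < c ∧ ∃ N : ℕ, ∀ n : ℕ, N ≤ n → ∀ s : ℕ, ∀ A : Alg n s,
      (∀ I : Finset (Fin n), (2 / 3 : ℝ≥0∞) ≤ estProb A α I) →
      c * Real.logb 2 n / iterLog k n ≤ (s : ℝ) :=
  stmt1_general α hα k
end

section
/- Let n ≥ 2 be an integer, i ≥ 1 an integer with b := log^{[i]} n ≥ 2, and set r_i = b / (16 · log₂ b). Let n_i be a real with 0 < n_i ≤ n, let j be an integer with 0 ≤ j ≤ r_i − 1, and set n_{i+1} = n_i / b^{4j+2}. Then the interval [n/n_{i+1}, (n/n_{i+1})·b^{1/4}] is contained in the interval [n/n_i, (n/n_i)·(log^{[i-1]} n)^{1/4}] (as intervals of real numbers). -/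
/-! Write `b = log^{[i]} n`, so that `|log^{[i-1]} n| = 2 ^ b`. The left endpoints compare because
`b ^ (4j+2) ≥ 1`; for the right ones, the bound `16 (j+1) log₂ b ≤ b` gives
`b ^ (4j+2) · b ^ (1/4) = 2 ^ ((4j + 9/4) log₂ b) ≤ 2 ^ (b/4 - 1) ≤ (log^{[i-1]} n) ^ (1/4)`. -/

open Real

-- `iterLog` can be negative; `Real.rpow` at a negative base `x` is `|x| ^ y * cos (y * π)`.
lemma abs_rpow_quarter_div_two_le (x : ℝ) : |x| ^ (1 / 4 : ℝ) / 2 ≤ x ^ (1 / 4 : ℝ) := by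
  rcases le_or_gt 0 x with hx | hx
  · rw [abs_of_nonneg hx]
    linarith [rpow_nonneg hx (1 / 4 : ℝ)]
  · have hcos : 1 / 2 ≤ cos (1 / 4 * π) := by
      rw [show (1 / 4 : ℝ) * π = π / 4 by ring, cos_pi_div_four]
      nlinarith [sq_sqrt (show (0 : ℝ) ≤ 2 by norm_num), sqrt_nonneg 2]
    rw [rpow_def_of_neg hx, rpow_def_of_pos (abs_pos.mpr hx.ne), log_abs]
    nlinarith [exp_pos (log x * (1 / 4))]

lemma two_rpow_iterLog_succ (k : ℕ) (x : ℝ) (h : iterLog (k + 1) x ≠ 0) :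
    (2 : ℝ) ^ iterLog (k + 1) x = |iterLog k x| := by
  have hk : iterLog k x ≠ 0 := by
    rintro hk
    simp [iterLog, hk] at h
  exact rpow_logb_eq_abs (by norm_num) (by norm_num) hk

lemma two_rpow_iterLog_succ_le_rpow_quarter (k : ℕ) (x : ℝ) (h : iterLog (k + 1) x ≠ 0) :
    (2 : ℝ) ^ (iterLog (k + 1) x / 4 - 1) ≤ iterLog k x ^ (1 / 4 : ℝ) := calc
  (2 : ℝ) ^ (iterLog (k + 1) x / 4 - 1) = ((2 : ℝ) ^ iterLog (k + 1) x) ^ (1 / 4 : ℝ) / 2 := by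
    rw [rpow_sub two_pos, rpow_one, ← rpow_mul zero_le_two, mul_one_div]
  _ = |iterLog k x| ^ (1 / 4 : ℝ) / 2 := by rw [two_rpow_iterLog_succ k x h]
  _ ≤ iterLog k x ^ (1 / 4 : ℝ) := abs_rpow_quarter_div_two_le _

lemma rpow_four_mul_add_le_two_rpow {b j : ℝ} (hb : 2 ≤ b)
    (hj : j ≤ b / (16 * logb 2 b) - 1) :
    b ^ (4 * j + 2 + 1 / 4) ≤ (2 : ℝ) ^ (b / 4 - 1) := by
  have hlb : 1 ≤ logb 2 b := by
    rw [← logb_self_eq_one one_lt_two]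
    exact logb_le_logb_of_le one_lt_two two_pos hb
  have hj' : 16 * logb 2 b * (j + 1) ≤ b := by
    rw [← le_div_iff₀' (by positivity)]
    linarith
  rw [← rpow_logb two_pos (by norm_num) (by linarith : 0 < b), ← rpow_mul zero_le_two,
    rpow_logb two_pos (by norm_num) (by linarith : 0 < b)]
  gcongr
  · norm_num
  · nlinarith

theorem stmt10_general (n : ℕ) (i : ℕ) (hi : 1 ≤ i)
    (hb : 2 ≤ iterLog i n)
    (ni : ℝ) (hni : 0 < ni)
    (j : ℕ)
    (hj : (j : ℝ) ≤ iterLog i n / (16 * Real.logb 2 (iterLog i n)) - 1) :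
    Set.Icc ((n : ℝ) / (ni / iterLog i n ^ (4 * (j : ℝ) + 2)))
        ((n : ℝ) / (ni / iterLog i n ^ (4 * (j : ℝ) + 2)) * iterLog i n ^ ((1 : ℝ) / 4)) ⊆
      Set.Icc ((n : ℝ) / ni) ((n : ℝ) / ni * iterLog (i - 1) n ^ ((1 : ℝ) / 4)) := by
  obtain ⟨k, rfl⟩ : ∃ k, i = k + 1 := ⟨i - 1, by omega⟩
  rw [Nat.add_sub_cancel]
  set b := iterLog (k + 1) n
  have hb0 : 0 < b := by linarith
  have hgrowth : 1 ≤ b ^ (4 * (j : ℝ) + 2) := one_le_rpow (by linarith) (by positivity)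
  have hstep : b ^ (4 * (j : ℝ) + 2) * b ^ (1 / 4 : ℝ) ≤ iterLog k n ^ (1 / 4 : ℝ) := by
    rw [← rpow_add hb0]
    exact (rpow_four_mul_add_le_two_rpow hb hj).trans
      (two_rpow_iterLog_succ_le_rpow_quarter k n hb0.ne')
  refine Set.Icc_subset_Icc ?_ ?_
  · gcongr
    exact div_le_self hni.le hgrowth
  · calc (n : ℝ) / (ni / b ^ (4 * (j : ℝ) + 2)) * b ^ (1 / 4 : ℝ)
        = n / ni * (b ^ (4 * (j : ℝ) + 2) * b ^ (1 / 4 : ℝ)) := by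
          rw [div_div_eq_mul_div]; ring
      _ ≤ n / ni * iterLog k n ^ (1 / 4 : ℝ) := by gcongr

theorem stmt10 (n : ℕ) (hn : 2 ≤ n) (i : ℕ) (hi : 1 ≤ i)
    (hb : 2 ≤ iterLog i n)
    (ni : ℝ) (hni : 0 < ni) (hni' : ni ≤ n)
    (j : ℕ)
    (hj : (j : ℝ) ≤ iterLog i n / (16 * Real.logb 2 (iterLog i n)) - 1) :
    Set.Icc ((n : ℝ) / (ni / iterLog i n ^ (4 * (j : ℝ) + 2)))
        ((n : ℝ) / (ni / iterLog i n ^ (4 * (j : ℝ) + 2)) * iterLog i n ^ ((1 : ℝ) / 4)) ⊆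
      Set.Icc ((n : ℝ) / ni) ((n : ℝ) / ni * iterLog (i - 1) n ^ ((1 : ℝ) / 4)) :=
  stmt10_general n i hi hb ni hni j hj
end

section
/- There is an integer N such that for every integer n ≥ N, writing τ = log* n, there exists an integer ℓ with 1 ≤ ℓ ≤ τ such that log₂ τ < log^{[ℓ]} n ≤ τ and log^{[ℓ−1]} n > τ; moreover, for this ℓ one has (log^{[ℓ]} n) / (480·τ)^{τ−ℓ+2} < 1. -/
lemma two_rpow_ge {t : ℝ} (ht : 1 ≤ t) : t + 1 ≤ (2:ℝ) ^ t := by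
  have h2 : (0:ℝ) < 2 := by norm_num
  have hsplit : (2:ℝ) ^ t = 2 ^ (1:ℝ) * 2 ^ (t - 1) := by
    rw [← Real.rpow_add h2]; ring_nf
  have hexp : (2:ℝ) ^ (t - 1) = Real.exp (Real.log 2 * (t - 1)) :=
    Real.rpow_def_of_pos h2 _
  have hineq : Real.log 2 * (t - 1) + 1 ≤ Real.exp (Real.log 2 * (t - 1)) :=
    Real.add_one_le_exp _
  have hlog : (0.6931471803 : ℝ) < Real.log 2 := Real.log_two_gt_d9
  rw [hsplit, Real.rpow_one, hexp]
  nlinarith [hineq, hlog]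

lemma logb_le_sub_one {x : ℝ} (hx : 2 ≤ x) : Real.logb 2 x ≤ x - 1 := by
  rw [Real.logb_le_iff_le_rpow (by norm_num) (by linarith)]
  have := two_rpow_ge (t := x - 1) (by linarith)
  linarith

lemma le_logb_two {c y : ℝ} (h : (2:ℝ) ^ c ≤ y) : c ≤ Real.logb 2 y := by
  have h0 : (0:ℝ) < (2:ℝ) ^ c := Real.rpow_pos_of_pos (by norm_num) _
  calc c = Real.logb 2 ((2:ℝ) ^ c) := (Real.logb_rpow (by norm_num) (by norm_num)).symm
    _ ≤ Real.logb 2 y := Real.logb_le_logb_of_le (by norm_num) h0 h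

lemma exists_iterLog_lt_two (x : ℝ) : ∃ k, iterLog k x < 2 := by
  by_contra h
  push_neg at h
  have key : ∀ k : ℕ, iterLog k x ≤ x - k := by
    intro k
    induction k with
    | zero => simp [iterLog]
    | succ k ih =>
      have h1 : iterLog (k + 1) x ≤ iterLog k x - 1 := logb_le_sub_one (h k)
      push_cast
      linarith
  obtain ⟨k, hk⟩ := exists_nat_gt (x - 2)
  have h1 := key k
  have h2 := h k
  linarith

theorem stmt12 : ∃ N : ℕ, ∀ n : ℕ, N ≤ n →
    ∃ ℓ : ℕ, 1 ≤ ℓ ∧ ℓ ≤ logStar n ∧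
      Real.logb 2 (logStar n) < iterLog ℓ n ∧
      iterLog ℓ n ≤ (logStar n : ℝ) ∧
      (logStar n : ℝ) < iterLog (ℓ - 1) n ∧
      iterLog ℓ n / (480 * logStar n : ℝ) ^ ((logStar n : ℝ) - ℓ + 2) < 1 := by
  refine ⟨65536, fun n hn => ?_⟩
  have hn' : (65536 : ℝ) ≤ (n : ℝ) := by exact_mod_cast hn
  have hne : {k : ℕ | iterLog k (n : ℝ) < 2}.Nonempty := exists_iterLog_lt_two _
  set τ := logStar n with hτdef
  have hτmem : iterLog τ (n : ℝ) < 2 := Nat.sInf_mem hne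
  -- lower bounds on the first few iterated logs
  have h0 : (2:ℝ) ≤ iterLog 0 n := by simp [iterLog]; linarith
  have h1 : (16:ℝ) ≤ iterLog 1 n := by
    show (16:ℝ) ≤ Real.logb 2 (iterLog 0 n)
    apply le_logb_two
    have : (2:ℝ) ^ (16:ℝ) = 65536 := by
      rw [show (16:ℝ) = ((16:ℕ):ℝ) by norm_num, Real.rpow_natCast]; norm_num
    rw [this]; simpa [iterLog] using hn'
  have h2 : (4:ℝ) ≤ iterLog 2 n := by
    show (4:ℝ) ≤ Real.logb 2 (iterLog 1 n)
    apply le_logb_two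
    have : (2:ℝ) ^ (4:ℝ) = 16 := by
      rw [show (4:ℝ) = ((4:ℕ):ℝ) by norm_num, Real.rpow_natCast]; norm_num
    linarith [this]
  have h3 : (2:ℝ) ≤ iterLog 3 n := by
    show (2:ℝ) ≤ Real.logb 2 (iterLog 2 n)
    apply le_logb_two
    have : (2:ℝ) ^ (2:ℝ) = 4 := by
      rw [show (2:ℝ) = ((2:ℕ):ℝ) by norm_num, Real.rpow_natCast]; norm_num
    linarith [this]
  have hlow : ∀ j : ℕ, j ≤ 3 → (2:ℝ) ≤ iterLog j n := by
    intro j hj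
    interval_cases j <;> linarith
  have hτ4 : 4 ≤ τ := by
    by_contra hc
    push_neg at hc
    have := hlow τ (by omega)
    linarith
  have hτR : (4:ℝ) ≤ (τ:ℝ) := by exact_mod_cast hτ4
  have hge : ∀ k, k < τ → (2:ℝ) ≤ iterLog k n := by
    intro k hk
    have := Nat.notMem_of_lt_sInf (s := {k : ℕ | iterLog k (n : ℝ) < 2}) hk
    simpa using not_lt.mp this
  -- iterLog k n ≤ n - k for k ≤ τ
  have hC : ∀ k, k ≤ τ → iterLog k n ≤ (n:ℝ) - k := by
    intro k hk
    induction k with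
    | zero => simp [iterLog]
    | succ k ih =>
      have hk' : k ≤ τ := by omega
      have hkτ : k < τ := by omega
      have ih' := ih hk'
      have h1 : iterLog (k + 1) n ≤ iterLog k n - 1 := logb_le_sub_one (hge k hkτ)
      push_cast
      linarith
  have hnτ : (τ:ℝ) < (n:ℝ) := by
    have hle := hC (τ - 1) (Nat.sub_le _ _)
    have hge' := hge (τ - 1) (by omega)
    have hcast : ((τ - 1 : ℕ) : ℝ) = (τ:ℝ) - 1 := by
      have : 1 ≤ τ := by omega
      push_cast [this]; ring
    rw [hcast] at hle
    linarith
  -- the set of ℓ with iterLog ℓ n ≤ τ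
  have hSτ : τ ∈ {ℓ : ℕ | iterLog ℓ (n:ℝ) ≤ (τ:ℝ)} := by
    simp only [Set.mem_setOf_eq]; linarith
  set ℓ := sInf {ℓ : ℕ | iterLog ℓ (n:ℝ) ≤ (τ:ℝ)} with hℓdef
  have hℓτ : ℓ ≤ τ := Nat.sInf_le hSτ
  have hℓmem : iterLog ℓ n ≤ (τ:ℝ) := Nat.sInf_mem ⟨τ, hSτ⟩
  have hℓ1 : 1 ≤ ℓ := by
    rcases Nat.eq_zero_or_pos ℓ with h | h
    · exfalso
      rw [h] at hℓmem
      simp only [iterLog] at hℓmem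
      linarith
    · exact h
  have hprev : (τ:ℝ) < iterLog (ℓ - 1) n := by
    have hlt : ℓ - 1 < ℓ := by omega
    have := Nat.notMem_of_lt_sInf (s := {ℓ : ℕ | iterLog ℓ (n:ℝ) ≤ (τ:ℝ)}) hlt
    simpa using not_le.mp (by simpa using this)
  have hsucc : iterLog ℓ n = Real.logb 2 (iterLog (ℓ - 1) n) := by
    conv_lhs => rw [show ℓ = (ℓ - 1) + 1 by omega]
    simp [iterLog]
  have hlogτ : Real.logb 2 (τ:ℝ) < iterLog ℓ n := by
    rw [hsucc]
    exact Real.logb_lt_logb (by norm_num) (by linarith) hprev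
  refine ⟨ℓ, hℓ1, hℓτ, hlogτ, hℓmem, hprev, ?_⟩
  -- final inequality
  have hb1 : (1:ℝ) ≤ 480 * (τ:ℝ) := by linarith
  have hb0 : (0:ℝ) < 480 * (τ:ℝ) := by linarith
  have he : (1:ℝ) ≤ (τ:ℝ) - (ℓ:ℝ) + 2 := by
    have : (ℓ:ℝ) ≤ (τ:ℝ) := by exact_mod_cast hℓτ
    linarith
  have hden : (0:ℝ) < (480 * (τ:ℝ)) ^ ((τ:ℝ) - (ℓ:ℝ) + 2) := Real.rpow_pos_of_pos hb0 _
  rw [div_lt_one hden]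
  calc iterLog ℓ n ≤ (τ:ℝ) := hℓmem
    _ < 480 * (τ:ℝ) := by linarith
    _ = (480 * (τ:ℝ)) ^ (1:ℝ) := (Real.rpow_one _).symm
    _ ≤ (480 * (τ:ℝ)) ^ ((τ:ℝ) - (ℓ:ℝ) + 2) := Real.rpow_le_rpow_of_exponent_le hb1 he
end
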